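/- arXiv:1010.0034 — 5 statements merged into one kernel-verified Lean document; each statement's English description precedes it below -/
import Mathlib

section
/- Let n ≥ 1, d ≥ 1, c > 0, let 1 ≤ s ≤ n, and let m_1*, …, m_s* be real target moments. Define f_s(x) = Σ_{k=1}^{s} (1/(4k))·(m_k(x) − m_k*)². Fix a robot i and coordinate r, and suppose the configuration x satisfies x i r ≠ x j r for every j ≠ i. Then the function t ↦ f_s(x with the coordinate x i r replaced by x i r + t) is differentiable at t = 0 with derivative −(c/n) · Σ_{k=1}^{s} (m_k(x) − m_k*) · [ (A(x) ∘ S_r(x)) · A(x)^{k−1} ]_{ii}; equivalently, the gradient-descent control is u_{ir} = (c/n) · Σ_{k=1}^{s} ((1/n)·tr(A(x)^k) − m_k*) · [ (A(x) ∘ S_r(x)) · A(x)^{k−1} ]_{ii}. -/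
/-!
Moving robot `i` by `t` along coordinate `r` changes only row and column `i` of `A`. Since
`x i r` differs from every other `x j r`, each changed entry `exp (-c ‖x i - x j‖₁)` is
differentiable at `t = 0`, with derivative `-c A_ij sgn (x i r - x j r)`; hence
`A' = -c (E_ii C - C E_ii)` with `C = A ∘ S_r`. Cyclicity of the trace gives
`tr (A ^ k)' = k tr (A' A ^ (k-1))`, and as `A` is symmetric and `C` antisymmetric this equals
`-2 c k [C A ^ (k-1)]_ii`. The chain rule on each term of `f_s` then yields the formula, the
factor `1 / (4 k)` cancelling the `2 · 2 k`.
-/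

open Matrix

/-- The weighted adjacency matrix of a configuration `x : Fin n → Fin d → ℝ` of `n` robots
in `ℝ^d`: `A(x)_{ij} = exp(−c Σ_r |x i r − x j r|)` for `i ≠ j` and `A(x)_{ii} = 0`. -/
noncomputable def adjMat {n d : ℕ} (c : ℝ) (x : Fin n → Fin d → ℝ) :
    Matrix (Fin n) (Fin n) ℝ :=
  Matrix.of fun i j =>
    if i = j then 0 else Real.exp (-c * ∑ r, |x i r - x j r|)

/-- The matrix `S_r(x)` with `(i,j)` entry `sgn(x i r − x j r)`. -/
noncomputable def signMat {n d : ℕ} (x : Fin n → Fin d → ℝ) (r : Fin d) :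
    Matrix (Fin n) (Fin n) ℝ :=
  Matrix.of fun p q => Real.sign (x p r - x q r)

open Finset

theorem hasDerivAt_abs_of_ne_zero {a : ℝ} (ha : a ≠ 0) :
    HasDerivAt (|·|) (Real.sign a) a := by
  rcases ha.lt_or_gt with ha | ha
  · simpa only [Real.sign_of_neg ha] using hasDerivAt_abs_neg ha
  · simpa only [Real.sign_of_pos ha] using hasDerivAt_abs_pos ha

theorem hasDerivAt_sum_abs_sub_update {ι : Type*} [Fintype ι] [DecidableEq ι]
    (u v : ι → ℝ) {r : ι} (h : u r ≠ v r) :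
    HasDerivAt (fun t => ∑ r', |Function.update u r (u r + t) r' - v r'|)
      (Real.sign (u r - v r)) 0 := by
  have hsplit : (fun t => ∑ r', |Function.update u r (u r + t) r' - v r'|) =
      fun t => |u r - v r + t| + ∑ r' ∈ univ.erase r, |u r' - v r'| := by
    funext t
    rw [← add_sum_erase _ _ (mem_univ r), Function.update_self]
    congr 1
    · ring_nf
    · exact sum_congr rfl fun r' hr' => by rw [Function.update_of_ne (ne_of_mem_erase hr')]
  rw [hsplit]
  refine HasDerivAt.add_const _ (HasDerivAt.comp_const_add _ _ ?_)
  simpa using hasDerivAt_abs_of_ne_zero (sub_ne_zero.mpr h)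

section MatrixCalculus

variable {𝕜 m : Type*} [NontriviallyNormedField 𝕜] [Fintype m]
  {F G : 𝕜 → Matrix m m 𝕜} {F' G' : Matrix m m 𝕜} {t₀ : 𝕜}

theorem hasDerivAt_matrix_mul_apply (hF : ∀ p q, HasDerivAt (fun t => F t p q) (F' p q) t₀)
    (hG : ∀ p q, HasDerivAt (fun t => G t p q) (G' p q) t₀) (p q : m) :
    HasDerivAt (fun t => (F t * G t) p q) ((F' * G t₀ + F t₀ * G') p q) t₀ := by
  simp only [mul_apply, Matrix.add_apply, ← sum_add_distrib]
  exact HasDerivAt.fun_sum fun l _ => (hF p l).fun_mul (hG l q)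

theorem hasDerivAt_matrix_pow_apply [DecidableEq m]
    (hF : ∀ p q, HasDerivAt (fun t => F t p q) (F' p q) t₀) (k : ℕ) (p q : m) :
    HasDerivAt (fun t => (F t ^ k) p q)
      ((∑ j ∈ range k, F t₀ ^ j * F' * F t₀ ^ (k - 1 - j)) p q) t₀ := by
  induction k generalizing p q with
  | zero => simpa using hasDerivAt_const t₀ ((1 : Matrix m m 𝕜) p q)
  | succ k ih =>
    have hsum : ∑ j ∈ range (k + 1), F t₀ ^ j * F' * F t₀ ^ (k + 1 - 1 - j) =
        F' * F t₀ ^ k + F t₀ * ∑ j ∈ range k, F t₀ ^ j * F' * F t₀ ^ (k - 1 - j) := by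
      rw [sum_range_succ', add_comm, mul_sum]
      congr 1
      · simp
      · refine sum_congr rfl fun j hj => ?_
        rw [show k + 1 - 1 - (j + 1) = k - 1 - j by omega, pow_succ', mul_assoc, mul_assoc,
          mul_assoc]
    simp only [pow_succ']
    rw [hsum]
    exact hasDerivAt_matrix_mul_apply hF ih p q

theorem hasDerivAt_trace_pow [DecidableEq m]
    (hF : ∀ p q, HasDerivAt (fun t => F t p q) (F' p q) t₀) (k : ℕ) :
    HasDerivAt (fun t => (F t ^ k).trace) (k * (F' * F t₀ ^ (k - 1)).trace) t₀ := by
  have hcyc : ∀ j ∈ range k, (F t₀ ^ j * F' * F t₀ ^ (k - 1 - j)).trace =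
      (F' * F t₀ ^ (k - 1)).trace := fun j hj => by
    rw [mul_assoc, trace_mul_comm, mul_assoc, ← pow_add,
      Nat.sub_add_cancel (by have := mem_range.mp hj; omega)]
  have h : HasDerivAt (fun t => (F t ^ k).trace)
      (∑ j ∈ range k, F t₀ ^ j * F' * F t₀ ^ (k - 1 - j)).trace t₀ :=
    HasDerivAt.fun_sum fun p _ => hasDerivAt_matrix_pow_apply hF k p p
  rwa [trace_sum, sum_congr rfl hcyc, sum_const, card_range, nsmul_eq_mul] at h

end MatrixCalculus

theorem trace_commutator_single_mul {m R : Type*} [Fintype m] [DecidableEq m] [CommRing R]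
    {C M : Matrix m m R} (hC : Cᵀ = -C) (hM : Mᵀ = M) (i : m) :
    ((single i i 1 * C - C * single i i 1) * M).trace = 2 * (C * M) i i := by
  have hMC : (M * C) i i = -(C * M) i i := by
    rw [← transpose_apply (M * C), transpose_mul, hC, hM, neg_mul, neg_apply]
  rw [sub_mul, trace_sub, mul_assoc, mul_assoc, trace_mul_comm C, mul_assoc, trace_single_mul,
    trace_single_mul, hMC]
  simp only [one_smul]
  ring

section Robots

variable {n d : ℕ}

theorem adjMat_transpose (c : ℝ) (x : Fin n → Fin d → ℝ) : (adjMat c x)ᵀ = adjMat c x := by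
  ext p q
  simp only [transpose_apply, adjMat, of_apply, eq_comm (a := q), abs_sub_comm (x q _)]

theorem adjMat_hadamard_signMat_transpose (c : ℝ) (x : Fin n → Fin d → ℝ) (r : Fin d) :
    (adjMat c x ⊙ signMat x r)ᵀ = -(adjMat c x ⊙ signMat x r) := by
  rw [transpose_hadamard, adjMat_transpose]
  ext p q
  simp only [transpose_apply, hadamard_apply, signMat, of_apply, Matrix.neg_apply]
  rw [← neg_sub, Real.sign_neg, mul_neg]

def shiftCoord (x : Fin n → Fin d → ℝ) (i : Fin n) (r : Fin d) (t : ℝ) :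
    Fin n → Fin d → ℝ :=
  Function.update x i (Function.update (x i) r (x i r + t))

@[simp]
theorem shiftCoord_zero (x : Fin n → Fin d → ℝ) (i : Fin n) (r : Fin d) :
    shiftCoord x i r 0 = x := by
  simp [shiftCoord]

theorem adjMat_shiftCoord_of_ne {c : ℝ} {x : Fin n → Fin d → ℝ} {i p q : Fin n} (r : Fin d)
    (hp : p ≠ i) (hq : q ≠ i) (t : ℝ) : adjMat c (shiftCoord x i r t) p q = adjMat c x p q := by
  simp only [adjMat, shiftCoord, of_apply, Function.update_of_ne hp, Function.update_of_ne hq]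

theorem hasDerivAt_adjMat_shiftCoord_self_apply (c : ℝ) {x : Fin n → Fin d → ℝ} {i q : Fin n}
    {r : Fin d} (hq : x i r ≠ x q r) :
    HasDerivAt (fun t => adjMat c (shiftCoord x i r t) i q)
      (-c * (adjMat c x ⊙ signMat x r) i q) 0 := by
  have hqi : i ≠ q := fun h => hq (h ▸ rfl)
  have h := ((hasDerivAt_sum_abs_sub_update (x i) (x q) hq).const_mul (-c)).exp
  simp only [add_zero, Function.update_eq_self] at h
  simp only [adjMat, shiftCoord, of_apply, hadamard_apply, signMat, if_neg hqi,
    Function.update_self, Function.update_of_ne hqi.symm]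
  convert h using 1
  ring

theorem hasDerivAt_adjMat_shiftCoord_apply (c : ℝ) {x : Fin n → Fin d → ℝ} {i : Fin n}
    {r : Fin d} (hsep : ∀ j : Fin n, j ≠ i → x i r ≠ x j r) (p q : Fin n) :
    HasDerivAt (fun t => adjMat c (shiftCoord x i r t) p q)
      ((-c • (single i i 1 * (adjMat c x ⊙ signMat x r) -
        (adjMat c x ⊙ signMat x r) * single i i 1) : Matrix (Fin n) (Fin n) ℝ) p q) 0 := by
  set C := adjMat c x ⊙ signMat x r
  have hC : ∀ p q, C q p = -C p q := fun p q => by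
    rw [← transpose_apply C, adjMat_hadamard_signMat_transpose, Matrix.neg_apply]
  have hsingle : ∀ p q, (single i i 1 * C - C * single i i 1 : Matrix (Fin n) (Fin n) ℝ) p q =
      (if p = i then C i q else 0) - (if q = i then C p i else 0) := fun p q => by
    simp [single, mul_apply, ite_and, eq_comm]
  rw [Matrix.smul_apply, hsingle, smul_eq_mul]
  by_cases hpq : p = q
  · subst hpq
    have hzero : (if p = i then C i p else 0) - (if p = i then C p i else 0) = 0 := by
      split_ifs with hpi <;> simp [hpi]
    simp only [hzero, mul_zero, adjMat, of_apply]
    exact hasDerivAt_const _ _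
  rcases eq_or_ne p i with rfl | hpi
  · rw [if_pos rfl, if_neg (Ne.symm hpq), sub_zero]
    exact hasDerivAt_adjMat_shiftCoord_self_apply c (hsep q (Ne.symm hpq))
  rcases eq_or_ne q i with rfl | hqi
  · have hsymm : ∀ t, adjMat c (shiftCoord x q r t) p q = adjMat c (shiftCoord x q r t) q p :=
      fun t => by rw [← transpose_apply (adjMat _ _), adjMat_transpose]
    rw [if_neg hpi, if_pos rfl, zero_sub, hC q p, neg_neg]
    simp_rw [hsymm]
    exact hasDerivAt_adjMat_shiftCoord_self_apply c (hsep p hpi)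
  simp only [adjMat_shiftCoord_of_ne r hpi hqi, if_neg hpi, if_neg hqi, sub_zero, mul_zero]
  exact hasDerivAt_const _ _

theorem hasDerivAt_trace_adjMat_shiftCoord_pow (c : ℝ) {x : Fin n → Fin d → ℝ} {i : Fin n}
    {r : Fin d} (hsep : ∀ j : Fin n, j ≠ i → x i r ≠ x j r) (k : ℕ) :
    HasDerivAt (fun t => (adjMat c (shiftCoord x i r t) ^ k).trace)
      (-(2 * c * k) * ((adjMat c x ⊙ signMat x r) * adjMat c x ^ (k - 1)) i i) 0 := by
  have h := hasDerivAt_trace_pow (hasDerivAt_adjMat_shiftCoord_apply c hsep) k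
  rw [shiftCoord_zero, smul_mul, trace_smul, smul_eq_mul,
    trace_commutator_single_mul (adjMat_hadamard_signMat_transpose c x r)
      (by rw [transpose_pow, adjMat_transpose])] at h
  exact h.congr_deriv (by ring)

end Robots

theorem hasDerivAt_cost_along_coordinate_general (n d : ℕ)
    (c : ℝ) (s : ℕ) (mstar : ℕ → ℝ)
    (x : Fin n → Fin d → ℝ) (i : Fin n) (r : Fin d)
    (hsep : ∀ j : Fin n, j ≠ i → x i r ≠ x j r) :
    HasDerivAt
      (fun t : ℝ =>
        ∑ k ∈ Finset.Icc 1 s, (1 / (4 * (k : ℝ))) *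
          ((1 / (n : ℝ)) *
              ((adjMat c (Function.update x i (Function.update (x i) r (x i r + t)))) ^ k).trace
            - mstar k) ^ 2)
      (-(c / (n : ℝ)) * ∑ k ∈ Finset.Icc 1 s,
        ((1 / (n : ℝ)) * ((adjMat c x) ^ k).trace - mstar k) *
          ((Matrix.hadamard (adjMat c x) (signMat x r)) * (adjMat c x) ^ (k - 1)) i i) 0 := by
  rw [mul_sum]
  refine HasDerivAt.fun_sum fun k hk => ?_
  have hk : (k : ℝ) ≠ 0 := Nat.cast_ne_zero.mpr (by have := (mem_Icc.mp hk).1; omega)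
  have h := (((hasDerivAt_trace_adjMat_shiftCoord_pow c hsep k).const_mul (1 / (n : ℝ))).sub_const
    (mstar k)).pow 2 |>.const_mul (1 / (4 * (k : ℝ)))
  rw [shiftCoord_zero] at h
  refine h.congr_deriv ?_
  field_simp
  ring

/-- with `f_s(x) = Σ_{k=1}^s (1/(4k)) (m_k(x) − m_k*)²` where
`m_k(x) = (1/n) tr(A(x)^k)`, if robot `i`'s `r`-th coordinate differs from that of every
other robot, then `t ↦ f_s(x with x i r replaced by x i r + t)` is differentiable at `0`
with derivative `−(c/n) Σ_{k=1}^s (m_k(x) − m_k*) [(A(x) ∘ S_r(x)) A(x)^(k−1)]_{ii}`. -/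
theorem hasDerivAt_cost_along_coordinate (n d : ℕ) (hn : 1 ≤ n) (hd : 1 ≤ d)
    (c : ℝ) (hc : 0 < c) (s : ℕ) (hs1 : 1 ≤ s) (hsn : s ≤ n) (mstar : ℕ → ℝ)
    (x : Fin n → Fin d → ℝ) (i : Fin n) (r : Fin d)
    (hsep : ∀ j : Fin n, j ≠ i → x i r ≠ x j r) :
    HasDerivAt
      (fun t : ℝ =>
        ∑ k ∈ Finset.Icc 1 s, (1 / (4 * (k : ℝ))) *
          ((1 / (n : ℝ)) *
              ((adjMat c (Function.update x i (Function.update (x i) r (x i r + t)))) ^ k).trace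
            - mstar k) ^ 2)
      (-(c / (n : ℝ)) * ∑ k ∈ Finset.Icc 1 s,
        ((1 / (n : ℝ)) * ((adjMat c x) ^ k).trace - mstar k) *
          ((Matrix.hadamard (adjMat c x) (signMat x r)) * (adjMat c x) ^ (k - 1)) i i) 0 :=
  hasDerivAt_cost_along_coordinate_general n d c s mstar x i r hsep
end

section
/- Let n ≥ 1, d ≥ 1, c > 0, let x0 be a reference configuration, and let P_0 be the associated polytope. Then for every k ≥ 1 and every sequence v : {0,1,…,k} → {1,…,n} with v(t) ≠ v(t+1) for all 0 ≤ t ≤ k−1, the walk-weight function x ↦ ∏_{t=0}^{k−1} A(x)_{v(t), v(t+1)} = exp(−c · Σ_{t=0}^{k−1} Σ_{r} |x (v(t)) r − x (v(t+1)) r|) is convex on P_0. -/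
open Matrix

/-- The polytope `P₀` associated to a reference configuration `x0`. -/
def polytopeP0 {n d : ℕ} (x0 : Fin n → Fin d → ℝ) : Set (Fin n → Fin d → ℝ) :=
  {x | ∀ i j : Fin n, ∀ r : Fin d, x0 i r ≤ x0 j r → x i r ≤ x j r}

lemma abs_combo (a b u1 u2 w1 w2 : ℝ) (ha : 0 ≤ a) (hb : 0 ≤ b)
    (h : (u1 ≤ u2 ∧ w1 ≤ w2) ∨ (u2 ≤ u1 ∧ w2 ≤ w1)) :
    |(a * u1 + b * w1) - (a * u2 + b * w2)| = a * |u1 - u2| + b * |w1 - w2| := by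
  rcases h with ⟨h1, h2⟩ | ⟨h1, h2⟩
  · rw [abs_of_nonpos (by nlinarith), abs_of_nonpos (by linarith),
      abs_of_nonpos (by linarith)]
    ring
  · rw [abs_of_nonneg (by nlinarith), abs_of_nonneg (by linarith),
      abs_of_nonneg (by linarith)]
    ring

/-- For any `k ≥ 1` and any walk `v : Fin (k+1) → Fin n` with consecutive
nodes distinct, the walk-weight function `x ↦ ∏_{t=0}^{k−1} A(x)_{v(t), v(t+1)}` is
convex on `P₀`. -/
theorem walk_weight_convexOn_polytope (n d : ℕ) (hn : 1 ≤ n) (hd : 1 ≤ d)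
    (c : ℝ) (hc : 0 < c) (x0 : Fin n → Fin d → ℝ)
    (k : ℕ) (hk : 1 ≤ k) (v : Fin (k + 1) → Fin n)
    (hv : ∀ t : Fin k, v t.castSucc ≠ v t.succ) :
    ConvexOn ℝ (polytopeP0 x0)
      (fun x => ∏ t : Fin k, adjMat c x (v t.castSucc) (v t.succ)) := by
  have hadj : ∀ z : Fin n → Fin d → ℝ,
      (∏ t : Fin k, adjMat c z (v t.castSucc) (v t.succ))
        = Real.exp (-c * ∑ t : Fin k, ∑ r, |z (v t.castSucc) r - z (v t.succ) r|) := by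
    intro z
    calc (∏ t : Fin k, adjMat c z (v t.castSucc) (v t.succ))
        = ∏ t : Fin k, Real.exp (-c * ∑ r, |z (v t.castSucc) r - z (v t.succ) r|) :=
          Finset.prod_congr rfl fun t _ => by simp [adjMat, hv t]
      _ = Real.exp (∑ t : Fin k, -c * ∑ r, |z (v t.castSucc) r - z (v t.succ) r|) :=
          (Real.exp_sum _ _).symm
      _ = _ := by rw [Finset.mul_sum]
  constructor
  · intro x hx y hy a b ha hb hab i j r h0
    have h1 := hx i j r h0
    have h2 := hy i j r h0
    simp only [Pi.add_apply, Pi.smul_apply, smul_eq_mul]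
    exact add_le_add (mul_le_mul_of_nonneg_left h1 ha) (mul_le_mul_of_nonneg_left h2 hb)
  · intro x hx y hy a b ha hb hab
    simp only [hadj]
    have key : (∑ t : Fin k, ∑ r, |(a • x + b • y) (v t.castSucc) r
          - (a • x + b • y) (v t.succ) r|)
        = a * (∑ t : Fin k, ∑ r, |x (v t.castSucc) r - x (v t.succ) r|)
          + b * (∑ t : Fin k, ∑ r, |y (v t.castSucc) r - y (v t.succ) r|) := by
      rw [Finset.mul_sum, Finset.mul_sum, ← Finset.sum_add_distrib]
      refine Finset.sum_congr rfl fun t _ => ?_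
      rw [Finset.mul_sum, Finset.mul_sum, ← Finset.sum_add_distrib]
      refine Finset.sum_congr rfl fun r _ => ?_
      simp only [Pi.add_apply, Pi.smul_apply, smul_eq_mul]
      refine abs_combo a b _ _ _ _ ha hb ?_
      rcases le_total (x0 (v t.castSucc) r) (x0 (v t.succ) r) with h | h
      · exact Or.inl ⟨hx _ _ _ h, hy _ _ _ h⟩
      · exact Or.inr ⟨hx _ _ _ h, hy _ _ _ h⟩
    rw [key]
    have := (convexOn_exp).2 (Set.mem_univ (-c * ∑ t : Fin k, ∑ r,
        |x (v t.castSucc) r - x (v t.succ) r|)) (Set.mem_univ (-c * ∑ t : Fin k, ∑ r,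
        |y (v t.castSucc) r - y (v t.succ) r|)) ha hb hab
    simp only [smul_eq_mul] at this ⊢
    calc Real.exp (-c * (a * (∑ t : Fin k, ∑ r, |x (v t.castSucc) r - x (v t.succ) r|)
            + b * (∑ t : Fin k, ∑ r, |y (v t.castSucc) r - y (v t.succ) r|)))
        = Real.exp (a * (-c * ∑ t : Fin k, ∑ r, |x (v t.castSucc) r - x (v t.succ) r|)
            + b * (-c * ∑ t : Fin k, ∑ r, |y (v t.castSucc) r - y (v t.succ) r|)) := by
          ring_nf
      _ ≤ _ := this
end

section
/- Let n ≥ 1, d ≥ 1, c > 0, let x0 be a reference configuration, and let P_0 be the associated polytope. Then for every k ≥ 1, the k-th spectral moment x ↦ m_k(x) = (1/n)·tr(A(x)^k) is a convex function on P_0. -/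
open Matrix

/-! On `P₀` the sign of every coordinate difference `x i r - x j r` is fixed, so the `ℓ¹`
distance between two robots is an affine function of `x` and each off-diagonal entry of `A(x)`
is the exponential of an affine function. Such exponentials are closed under products, so every
entry of `A(x)^k`, and hence `tr A(x)^k`, is a finite sum of them, and is therefore convex. -/

open Set

section ExpAffine

variable {E : Type*} [AddCommGroup E] [Module ℝ E]

def expAffineOn (s : Set E) : Submonoid (E → ℝ) where
  carrier := {f | ∃ g : E →ᵃ[ℝ] ℝ, EqOn f (Real.exp ∘ g) s}
  mul_mem' := by
    rintro f₁ f₂ ⟨g₁, hg₁⟩ ⟨g₂, hg₂⟩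
    refine ⟨g₁ + g₂, fun x hx => ?_⟩
    simp [hg₁ hx, hg₂ hx, Real.exp_add]
  one_mem' := ⟨0, fun x _ => by simp⟩

theorem convexOn_of_mem_expAffineOn {s : Set E} (hs : Convex ℝ s) {f : E → ℝ}
    (hf : f ∈ expAffineOn s) : ConvexOn ℝ s f := by
  obtain ⟨g, hg⟩ := hf
  exact ((convexOn_exp.comp_affineMap g).subset (subset_univ _) hs).congr hg.symm

theorem convexOn_of_mem_subsemiringClosure_expAffineOn {s : Set E} (hs : Convex ℝ s)
    {f : E → ℝ} (hf : f ∈ (expAffineOn s).subsemiringClosure) : ConvexOn ℝ s f := by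
  rw [Submonoid.subsemiringClosure_mem] at hf
  induction hf using AddSubmonoid.closure_induction with
  | mem g hg => exact convexOn_of_mem_expAffineOn hs hg
  | zero => exact convexOn_const 0 hs
  | add g h _ _ hg hh => exact hg.add hh

end ExpAffine

theorem Matrix.trace_pow_mem_of_forall_apply_mem {α R ι : Type*} [CommSemiring R]
    [Fintype ι] [DecidableEq ι] {S : Subsemiring (α → R)} {A : α → Matrix ι ι R}
    (hA : ∀ i j, (fun x => A x i j) ∈ S) (k : ℕ) : (fun x => (A x ^ k).trace) ∈ S := by
  obtain ⟨M, hM, hMA⟩ : ∃ M : Matrix ι ι (α → R), M ∈ S.matrix ∧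
      ∀ x, (Pi.evalRingHom (fun _ => R) x).mapMatrix M = A x :=
    ⟨Matrix.of fun i j x => A x i j, hA, fun _ => rfl⟩
  have hMk : (M ^ k).trace = fun x => (A x ^ k).trace := by
    funext x
    rw [← hMA, ← map_pow]
    exact AddMonoidHom.map_trace (Pi.evalRingHom (fun _ => R) x) (M ^ k)
  exact hMk ▸ Subsemiring.sum_mem _ fun i _ => pow_mem hM k i i

theorem convex_polytopeP0 {n d : ℕ} (x0 : Fin n → Fin d → ℝ) :
    Convex ℝ (polytopeP0 x0) := by
  intro x hx y hy a b ha hb _ i j r hij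
  simp only [Pi.add_apply, Pi.smul_apply, smul_eq_mul]
  gcongr
  exacts [hx i j r hij, hy i j r hij]

theorem exists_affineMap_eqOn_polytopeP0 {n d : ℕ} (x0 : Fin n → Fin d → ℝ) (i j : Fin n) :
    ∃ g : (Fin n → Fin d → ℝ) →ᵃ[ℝ] ℝ,
      EqOn (fun x => ∑ r, |x i r - x j r|) g (polytopeP0 x0) := by
  let coord (l : Fin n) (r : Fin d) : (Fin n → Fin d → ℝ) →ₗ[ℝ] ℝ :=
    LinearMap.proj (φ := fun _ => ℝ) r ∘ₗ LinearMap.proj (φ := fun _ => Fin d → ℝ) l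
  let σ (r : Fin d) : ℝ := if x0 i r ≤ x0 j r then 1 else -1
  refine ⟨(∑ r, σ r • (coord j r - coord i r)).toAffineMap, fun x hx => ?_⟩
  have habs (r : Fin d) : |x i r - x j r| = σ r * (x j r - x i r) := by
    by_cases h : x0 i r ≤ x0 j r
    · rw [show σ r = 1 from if_pos h, one_mul, abs_sub_comm,
        abs_of_nonneg (sub_nonneg.2 (hx i j r h))]
    · rw [show σ r = -1 from if_neg h,
        abs_of_nonneg (sub_nonneg.2 (hx j i r (le_of_not_ge h)))]
      ring
  simp [habs, coord]

theorem adjMat_apply_mem_subsemiringClosure_expAffineOn {n d : ℕ} (c : ℝ)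
    (x0 : Fin n → Fin d → ℝ) (i j : Fin n) :
    (fun x => adjMat c x i j) ∈ (expAffineOn (polytopeP0 x0)).subsemiringClosure := by
  by_cases hij : i = j
  · have hzero : (fun x : Fin n → Fin d → ℝ => adjMat c x i j) = 0 := by
      ext; simp [adjMat, hij]
    exact hzero ▸ Subsemiring.zero_mem _
  obtain ⟨g, hg⟩ := exists_affineMap_eqOn_polytopeP0 x0 i j
  refine (Submonoid.subsemiringClosure_mem _).2
    (AddSubmonoid.subset_closure ⟨-c • g, fun x hx => ?_⟩)
  simp [adjMat, hij, ← hg hx]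

theorem spectral_moment_convexOn_polytope_general (n d : ℕ)
    (c : ℝ) (x0 : Fin n → Fin d → ℝ) (k : ℕ) :
    ConvexOn ℝ (polytopeP0 x0)
      (fun x => (1 / (n : ℝ)) * ((adjMat c x) ^ k).trace) := by
  have htrace := Matrix.trace_pow_mem_of_forall_apply_mem
    (adjMat_apply_mem_subsemiringClosure_expAffineOn c x0) k
  have hconv := convexOn_of_mem_subsemiringClosure_expAffineOn (convex_polytopeP0 x0) htrace
  simpa only [smul_eq_mul] using hconv.smul (c := 1 / (n : ℝ)) (by positivity)

/-- For every `k ≥ 1`, the `k`-th spectral moment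
`x ↦ m_k(x) = (1/n) tr(A(x)^k)` is convex on `P₀`. -/
theorem spectral_moment_convexOn_polytope (n d : ℕ) (hn : 1 ≤ n) (hd : 1 ≤ d)
    (c : ℝ) (hc : 0 < c) (x0 : Fin n → Fin d → ℝ) (k : ℕ) (hk : 1 ≤ k) :
    ConvexOn ℝ (polytopeP0 x0)
      (fun x => (1 / (n : ℝ)) * ((adjMat c x) ^ k).trace) :=
  spectral_moment_convexOn_polytope_general n d c x0 k
end

section
/- Let n ≥ 1, d ≥ 1, c > 0, let 1 ≤ s ≤ n and let m_1*, …, m_s* be real target moments. Define f_s(x) = Σ_{k=1}^{s} (1/(4k))·(m_k(x) − m_k*)². Let x0 be a reference configuration with associated polytope P_0, and let C be a convex subset of P_0 such that m_k(x) ≥ m_k* for every x ∈ C and every k = 1, …, s. Then f_s is convex on C. -/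
open Matrix

section Aux

variable {E : Type*} [NormedAddCommGroup E] [NormedSpace ℝ E] {C : Set E}

/-- `g` agrees on `C` with a finite sum of exponentials of linear maps. -/
def SumExpLin (C : Set E) (g : E → ℝ) : Prop :=
  ∃ (ι : Type) (_ : Fintype ι) (φ : ι → (E →ₗ[ℝ] ℝ)),
    ∀ x ∈ C, g x = ∑ t, Real.exp (φ t x)

lemma convexOn_congr {f g : E → ℝ} (hf : ConvexOn ℝ C f)
    (h : ∀ x ∈ C, f x = g x) : ConvexOn ℝ C g := by
  refine ⟨hf.1, fun x hx y hy a b ha hb hab => ?_⟩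
  rw [← h _ (hf.1 hx hy ha hb hab), ← h _ hx, ← h _ hy]
  exact hf.2 hx hy ha hb hab

lemma convexOn_sum_finset {ι : Type*} (t : Finset ι) (f : ι → E → ℝ)
    (hC : Convex ℝ C) (hf : ∀ i ∈ t, ConvexOn ℝ C (f i)) :
    ConvexOn ℝ C (fun x => ∑ i ∈ t, f i x) := by
  classical
  induction t using Finset.induction with
  | empty => simpa using convexOn_const 0 hC
  | @insert a s' ha ih =>
    simp only [Finset.sum_insert ha]
    exact (hf a (Finset.mem_insert_self a s')).add
      (ih fun i hi => hf i (Finset.mem_insert_of_mem hi))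

lemma SumExpLin.convexOn {g : E → ℝ} (hC : Convex ℝ C) (hg : SumExpLin C g) :
    ConvexOn ℝ C g := by
  obtain ⟨ι, _, φ, hφ⟩ := hg
  refine convexOn_congr (convexOn_sum_finset Finset.univ
    (fun t x => Real.exp (φ t x)) hC fun t _ => ?_) fun x hx => (hφ x hx).symm
  have h := (convexOn_exp.comp_affineMap (φ t).toAffineMap)
  simp only [Set.preimage_univ] at h
  exact h.subset (Set.subset_univ C) hC

lemma SumExpLin.congr {f g : E → ℝ} (hf : SumExpLin C f)
    (h : ∀ x ∈ C, f x = g x) : SumExpLin C g := by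
  obtain ⟨ι, _, φ, hφ⟩ := hf
  exact ⟨ι, ‹_›, φ, fun x hx => (h x hx) ▸ hφ x hx⟩

lemma SumExpLin.zero : SumExpLin C (fun _ => (0 : ℝ)) :=
  ⟨Empty, inferInstance, fun t => t.elim, fun x _ => by simp⟩

lemma SumExpLin.mul {g h : E → ℝ} (hg : SumExpLin C g) (hh : SumExpLin C h) :
    SumExpLin C (fun x => g x * h x) := by
  obtain ⟨ι, _, φ, hφ⟩ := hg
  obtain ⟨κ, _, ψ, hψ⟩ := hh
  refine ⟨ι × κ, inferInstance, fun p => φ p.1 + ψ p.2, fun x hx => ?_⟩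
  show g x * h x = _
  rw [hφ x hx, hψ x hx, Finset.sum_mul_sum, ← Finset.univ_product_univ,
    Finset.sum_product]
  exact Finset.sum_congr rfl fun p _ => Finset.sum_congr rfl fun q _ => by
    simp [Real.exp_add]

lemma SumExpLin.sum {ι : Type*} (t : Finset ι) (f : ι → E → ℝ)
    (hf : ∀ i ∈ t, SumExpLin C (f i)) :
    SumExpLin C (fun x => ∑ i ∈ t, f i x) := by
  classical
  induction t using Finset.induction with
  | empty => simpa using SumExpLin.zero
  | @insert a s' ha ih =>
    simp only [Finset.sum_insert ha]
    obtain ⟨ι₁, _, φ, hφ⟩ := hf a (Finset.mem_insert_self a s')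
    obtain ⟨ι₂, _, ψ, hψ⟩ := ih fun i hi => hf i (Finset.mem_insert_of_mem hi)
    refine ⟨ι₁ ⊕ ι₂, inferInstance, Sum.elim φ ψ, fun x hx => ?_⟩
    have h2 : ∑ i ∈ s', f i x = ∑ t : ι₂, Real.exp (ψ t x) := hψ x hx
    show f a x + ∑ i ∈ s', f i x = _
    rw [Fintype.sum_sum_type, hφ x hx, h2]
    simp

/-- Convexity of `(g - a)²` when `g` is convex and `≥ a` on `C`. -/
lemma convexOn_sq_sub {g : E → ℝ} {a : ℝ} (hg : ConvexOn ℝ C g)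
    (hga : ∀ x ∈ C, a ≤ g x) : ConvexOn ℝ C (fun x => (g x - a) ^ 2) := by
  refine ⟨hg.1, fun x hx y hy p q hp hq hpq => ?_⟩
  have hxC : p • x + q • y ∈ C := hg.1 hx hy hp hq hpq
  have hcvx := hg.2 hx hy hp hq hpq
  simp only [smul_eq_mul] at hcvx ⊢
  have key : p * (g x - a) + q * (g y - a) = p * g x + q * g y - a := by
    linear_combination (-a) * hpq
  have h1 : g (p • x + q • y) - a ≤ p * (g x - a) + q * (g y - a) := by
    rw [key]; linarith
  have h0 : (0:ℝ) ≤ g (p • x + q • y) - a := sub_nonneg.2 (hga _ hxC)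
  have h2 : (g (p • x + q • y) - a) ^ 2 ≤ (p * (g x - a) + q * (g y - a)) ^ 2 :=
    pow_le_pow_left₀ h0 h1 2
  have hq' : q = 1 - p := by linarith
  have h3 : (p * (g x - a) + q * (g y - a)) ^ 2
      ≤ p * (g x - a) ^ 2 + q * (g y - a) ^ 2 := by
    rw [hq']
    nlinarith [mul_nonneg hp (by linarith : (0:ℝ) ≤ 1 - p),
      sq_nonneg ((g x - a) - (g y - a))]
  exact h2.trans h3

end Aux

section Entries

variable {n d : ℕ} {c : ℝ} {x0 : Fin n → Fin d → ℝ}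

/-- On `C ⊆ P₀`, each entry of `adjMat c x` is a sum of exponentials of linear maps. -/
lemma sumExpLin_adjMat {C : Set (Fin n → Fin d → ℝ)} (hc : 0 < c)
    (hCsub : C ⊆ polytopeP0 x0) (i j : Fin n) :
    SumExpLin C (fun x => adjMat c x i j) := by
  classical
  by_cases hij : i = j
  · exact ⟨Empty, inferInstance, fun t => t.elim, fun x _ => by simp [adjMat, hij]⟩
  · set δ : Fin d → ((Fin n → Fin d → ℝ) →ₗ[ℝ] ℝ) := fun r =>
      ((LinearMap.proj r : (Fin d → ℝ) →ₗ[ℝ] ℝ).comp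
        (LinearMap.proj i : (Fin n → Fin d → ℝ) →ₗ[ℝ] (Fin d → ℝ))) -
      ((LinearMap.proj r : (Fin d → ℝ) →ₗ[ℝ] ℝ).comp
        (LinearMap.proj j : (Fin n → Fin d → ℝ) →ₗ[ℝ] (Fin d → ℝ))) with hδ
    refine ⟨Unit, inferInstance,
      fun _ => ∑ r, (if x0 i r ≤ x0 j r then c else -c) • δ r, fun x hx => ?_⟩
    have hx' := hCsub hx
    simp only [Finset.univ_unique, Finset.sum_singleton, adjMat, Matrix.of_apply,
      if_neg hij]
    congr 1
    rw [LinearMap.sum_apply, Finset.mul_sum]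
    refine Finset.sum_congr rfl fun r _ => ?_
    simp only [LinearMap.smul_apply, hδ, LinearMap.sub_apply, LinearMap.comp_apply,
      LinearMap.proj_apply, smul_eq_mul]
    by_cases h : x0 i r ≤ x0 j r
    · have : x i r ≤ x j r := hx' i j r h
      rw [if_pos h, abs_of_nonpos (by linarith)]
      ring
    · have h' : x0 j r ≤ x0 i r := le_of_not_ge h
      have : x j r ≤ x i r := hx' j i r h'
      rw [if_neg h, abs_of_nonneg (by linarith)]

lemma sumExpLin_pow_entry {C : Set (Fin n → Fin d → ℝ)} (hc : 0 < c)
    (hCsub : C ⊆ polytopeP0 x0) (k : ℕ) (i j : Fin n) :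
    SumExpLin C (fun x => ((adjMat c x) ^ k * adjMat c x) i j) := by
  induction k generalizing i j with
  | zero =>
    refine (sumExpLin_adjMat hc hCsub i j).congr fun x _ => ?_
    simp [pow_zero, Matrix.one_mul]
  | succ k ih =>
    refine (SumExpLin.sum Finset.univ
      (fun l x => ((adjMat c x) ^ k * adjMat c x) i l * adjMat c x l j)
      (fun l _ => (ih i l).mul (sumExpLin_adjMat hc hCsub l j))).congr
      fun x _ => ?_
    conv_rhs => rw [pow_succ, Matrix.mul_apply]

end Entries

/-- If `C` is a convex subset of `P₀` on which `m_k(x) ≥ m_k*` for all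
`k = 1, …, s`, then `f_s(x) = Σ_{k=1}^s (1/(4k)) (m_k(x) − m_k*)²` is convex on `C`. -/
theorem cost_convexOn_of_moments_ge (n d : ℕ) (hn : 1 ≤ n) (hd : 1 ≤ d)
    (c : ℝ) (hc : 0 < c) (s : ℕ) (hs1 : 1 ≤ s) (hsn : s ≤ n) (mstar : ℕ → ℝ)
    (x0 : Fin n → Fin d → ℝ) (C : Set (Fin n → Fin d → ℝ))
    (hCconv : Convex ℝ C) (hCsub : C ⊆ polytopeP0 x0)
    (hmom : ∀ x ∈ C, ∀ k ∈ Finset.Icc 1 s,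
      mstar k ≤ (1 / (n : ℝ)) * ((adjMat c x) ^ k).trace) :
    ConvexOn ℝ C
      (fun x => ∑ k ∈ Finset.Icc 1 s, (1 / (4 * (k : ℝ))) *
        ((1 / (n : ℝ)) * ((adjMat c x) ^ k).trace - mstar k) ^ 2) := by
  refine convexOn_sum_finset _ _ hCconv fun k hk => ?_
  have hk1 : 1 ≤ k := (Finset.mem_Icc.mp hk).1
  have htr : SumExpLin C (fun x => ((adjMat c x) ^ k).trace) := by
    obtain ⟨k', rfl⟩ : ∃ k', k = k' + 1 := ⟨k - 1, by omega⟩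
    refine (SumExpLin.sum Finset.univ
      (fun i x => ((adjMat c x) ^ k' * adjMat c x) i i)
      (fun i _ => sumExpLin_pow_entry hc hCsub k' i i)).congr fun x _ => ?_
    rw [pow_succ]
    simp [Matrix.trace, Matrix.diag]
  have hmconv : ConvexOn ℝ C
      (fun x => (1 / (n : ℝ)) * ((adjMat c x) ^ k).trace) := by
    have h := (htr.convexOn hCconv).smul
      (c := 1 / (n : ℝ)) (by positivity)
    simpa [smul_eq_mul] using h
  have hsq := convexOn_sq_sub hmconv (fun x hx => hmom x hx k hk)
  have h := hsq.smul (c := 1 / (4 * (k : ℝ))) (by positivity)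
  simpa [smul_eq_mul] using h
end

section
/- Let n ≥ 1, d ≥ 1, c > 0, let 1 ≤ s ≤ n, let m_1*, …, m_s* be real target moments, and let ε_1, …, ε_s > 0. Let F = {x : m_k(x) > m_k* for all k = 1,…,s} and V = f_s + b_s, where f_s(x) = Σ_{k=1}^{s} (1/(4k))·(m_k(x) − m_k*)² and b_s(x) = Σ_{k=1}^{s} (ε_k/(4k))·(m_k(x) − m_k*)^{−2}. Then for every real number C, the sublevel set {x ∈ F : V(x) ≤ C} is a closed subset of the space of all configurations (the barrier b_s blows up on the boundary of F, so sublevel sets of V cannot touch it). -/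
open Matrix

/-- The `k`-th spectral moment `m_k(x) = (1/n) tr(A(x)^k)`. -/
noncomputable def momentC {n d : ℕ} (c : ℝ) (k : ℕ) (x : Fin n → Fin d → ℝ) : ℝ :=
  (1 / (n : ℝ)) * ((adjMat c x) ^ k).trace

/-! A barrier term `a (u − l)⁻² ≤ C` with `a > 0` forces `a ≤ C (u − l)²`, a closed condition
that already excludes `u = l`. So the sublevel set lies in a closed set on which the potential
is continuous, and is closed there. -/

theorem isClosed_barrier_sublevel {X ι : Type*} [TopologicalSpace X] (S : Finset ι)
    (u : ι → X → ℝ) (hu : ∀ k, Continuous (u k)) (l a : ι → ℝ) (ha : ∀ k ∈ S, 0 < a k)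
    (f : X → ℝ) (hf : Continuous f) (hf0 : ∀ x, 0 ≤ f x) (C : ℝ) :
    IsClosed {x | (∀ k ∈ S, l k < u k x) ∧
      f x + ∑ k ∈ S, a k * ((u k x - l k) ^ 2)⁻¹ ≤ C} := by
  set K := {x | ∀ k ∈ S, l k ≤ u k x ∧ a k ≤ C * (u k x - l k) ^ 2}
  have hK : IsClosed K := by
    simp only [K, Set.ofPred_forall]
    exact isClosed_biInter fun k _ =>
      (isClosed_le continuous_const (hu k)).inter
        (isClosed_le continuous_const (continuous_const.mul (((hu k).sub continuous_const).pow 2)))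
  have hK_pos : ∀ x ∈ K, ∀ k ∈ S, l k < u k x := fun x hx k hk => by
    obtain ⟨hle, hbound⟩ := hx k hk
    refine hle.lt_of_ne fun heq => ?_
    rw [heq, sub_self] at hbound
    linarith [ha k hk]
  have hsub_K : ∀ x, (∀ k ∈ S, l k < u k x) →
      f x + ∑ k ∈ S, a k * ((u k x - l k) ^ 2)⁻¹ ≤ C → x ∈ K := by
    intro x hpos hV k hk
    have hterms : ∀ j ∈ S, 0 ≤ a j * ((u j x - l j) ^ 2)⁻¹ :=
      fun j hj => mul_nonneg (ha j hj).le (by positivity)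
    have hterm_le : a k * ((u k x - l k) ^ 2)⁻¹ ≤ C :=
      (Finset.single_le_sum hterms hk).trans (by linarith [hf0 x])
    exact ⟨(hpos k hk).le, (mul_inv_le_iff₀ (pow_pos (sub_pos.2 (hpos k hk)) 2)).1 hterm_le⟩
  have hV : ContinuousOn (fun x => f x + ∑ k ∈ S, a k * ((u k x - l k) ^ 2)⁻¹) K := by
    refine hf.continuousOn.add (continuousOn_finsetSum _ fun k hk => ?_)
    refine continuousOn_const.mul
      ((((hu k).sub continuous_const).pow 2).continuousOn.inv₀ fun x hx => ?_)
    exact pow_ne_zero 2 (sub_pos.2 (hK_pos x hx k hk)).ne'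
  convert hV.preimage_isClosed_of_isClosed hK isClosed_Iic using 1
  ext x
  exact ⟨fun hx => ⟨hsub_K x hx.1 hx.2, hx.2⟩, fun hx => ⟨hK_pos x hx.1, hx.2⟩⟩

theorem continuous_adjMat {n d : ℕ} (c : ℝ) : Continuous (adjMat (n := n) (d := d) c) := by
  refine continuous_pi fun i => continuous_pi fun j => ?_
  by_cases h : i = j
  · simpa [adjMat, h] using continuous_const
  · simp only [adjMat, Matrix.of_apply, if_neg h]
    exact Real.continuous_exp.comp (continuous_const.mul
      (continuous_finsetSum _ fun r _ =>
        ((continuous_apply_apply i r).sub (continuous_apply_apply j r)).abs))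

theorem continuous_momentC {n d : ℕ} (c : ℝ) (k : ℕ) :
    Continuous (momentC (n := n) (d := d) c k) :=
  continuous_const.mul ((continuous_adjMat c).pow k).matrix_trace

theorem sublevel_set_isClosed_general (n d : ℕ)
    (c : ℝ) (s : ℕ) (mstar ε : ℕ → ℝ)
    (hε : ∀ k ∈ Finset.Icc 1 s, 0 < ε k) (C : ℝ) :
    IsClosed {x : Fin n → Fin d → ℝ |
      (∀ k ∈ Finset.Icc 1 s, mstar k < momentC c k x) ∧
      (∑ k ∈ Finset.Icc 1 s, (1 / (4 * (k : ℝ))) * (momentC c k x - mstar k) ^ 2) +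
        (∑ k ∈ Finset.Icc 1 s, (ε k / (4 * (k : ℝ))) * ((momentC c k x - mstar k) ^ 2)⁻¹)
        ≤ C} := by
  have hweight : ∀ k ∈ Finset.Icc 1 s, 0 < ε k / (4 * (k : ℝ)) := fun k hk => by
    have : (1 : ℝ) ≤ k := by exact_mod_cast (Finset.mem_Icc.1 hk).1
    exact div_pos (hε k hk) (by positivity)
  refine isClosed_barrier_sublevel _ (fun k => momentC c k) (continuous_momentC c) mstar _
    hweight _ ?_ (fun x => Finset.sum_nonneg fun k _ => by positivity) C
  exact continuous_finsetSum _ fun k _ =>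
    continuous_const.mul (((continuous_momentC c k).sub continuous_const).pow 2)

/-- With `F = {x : m_k(x) > m_k* ∀ k = 1,…,s}`, the cost
`f_s(x) = Σ_{k=1}^s (1/(4k)) (m_k(x) − m_k*)²` and the barrier
`b_s(x) = Σ_{k=1}^s (ε_k/(4k)) (m_k(x) − m_k*)⁻²` (with `ε_k > 0`), every sublevel set
`{x ∈ F : f_s(x) + b_s(x) ≤ C}` is closed in the space of all configurations. -/
theorem sublevel_set_isClosed (n d : ℕ) (hn : 1 ≤ n) (hd : 1 ≤ d)
    (c : ℝ) (hc : 0 < c) (s : ℕ) (hs1 : 1 ≤ s) (hsn : s ≤ n) (mstar ε : ℕ → ℝ)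
    (hε : ∀ k ∈ Finset.Icc 1 s, 0 < ε k) (C : ℝ) :
    IsClosed {x : Fin n → Fin d → ℝ |
      (∀ k ∈ Finset.Icc 1 s, mstar k < momentC c k x) ∧
      (∑ k ∈ Finset.Icc 1 s, (1 / (4 * (k : ℝ))) * (momentC c k x - mstar k) ^ 2) +
        (∑ k ∈ Finset.Icc 1 s, (ε k / (4 * (k : ℝ))) * ((momentC c k x - mstar k) ^ 2)⁻¹)
        ≤ C} :=
  sublevel_set_isClosed_general n d c s mstar ε hε C
end
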